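/- Let f : ℝⁿ → ℝ be Lipschitz continuous with Lipschitz constant L ≥ 0, let h > 0, n ≥ 1, λ > 0. Then for every point x_k of the grid hℤⁿ: |M_λ^h(f)(x_k) − M_λ(f)(x_k)| ≤ (2 + √n)·L·h + 2λh²n. -/

import Mathlib

/-!
Every discrete competitor `x_k + h r` is a continuous competitor, so `M_λ(f) ≤ M_λ^h(f)` on the
grid. Conversely, rounding the coordinates of `y - x_k` towards zero gives a grid point `z` with
`|z - x_k| ≤ |y - x_k|` and `|z - y| ≤ √n h`, so by the Lipschitz bound
`M_λ^h(f)(x_k) ≤ f y + λ|y - x_k|² + √n L h` for every `y`. Hence the error is at most `√n L h`.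
-/

noncomputable section

/-- Global lower Moreau envelope `M_λ(f)(x) = inf_{y∈ℝⁿ} {f(y) + λ|y−x|²}`. -/
def moreauLower {n : ℕ} (lam : ℝ) (f : EuclideanSpace ℝ (Fin n) → ℝ)
    (x : EuclideanSpace ℝ (Fin n)) : ℝ :=
  ⨅ y : EuclideanSpace ℝ (Fin n), (f y + lam * ‖y - x‖ ^ 2)

/-- The grid point `x_k = h·k` of the grid `hℤⁿ`. -/
def gridPt {n : ℕ} (h : ℝ) (k : Fin n → ℤ) : EuclideanSpace ℝ (Fin n) :=
  (WithLp.equiv 2 (Fin n → ℝ)).symm (fun i => h * (k i))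

/-- The discrete lower Moreau envelope at the grid point `x_k`:
`M_λ^h(f)(x_k) = inf {f(x_k + r·h) + λh²|r|² : r ∈ ℤⁿ}`. -/
def moreauLowerDiscrete {n : ℕ} (lam h : ℝ) (f : EuclideanSpace ℝ (Fin n) → ℝ)
    (k : Fin n → ℤ) : ℝ :=
  ⨅ r : Fin n → ℤ, (f (gridPt h (k + r)) + lam * h ^ 2 * ‖gridPt 1 r‖ ^ 2)

open Set

lemma bddBelow_range_add_mul_norm_sub_sq {E : Type*} [SeminormedAddCommGroup E] {f : E → ℝ}
    {L lam : ℝ} (hf : ∀ x y, |f x - f y| ≤ L * ‖x - y‖) (hlam : 0 < lam) (x : E) :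
    BddBelow (range fun y => f y + lam * ‖y - x‖ ^ 2) := by
  refine ⟨f x - L ^ 2 / (4 * lam), ?_⟩
  rintro _ ⟨y, rfl⟩
  have hxy : f x - f y ≤ L * ‖y - x‖ := norm_sub_rev x y ▸ (abs_le.mp (hf x y)).2
  -- `L t ≤ λ t² + L² / (4λ)`
  have hamgm : L ^ 2 / (4 * lam) * (4 * lam) = L ^ 2 := div_mul_cancel₀ _ (by positivity)
  nlinarith [sq_nonneg (2 * lam * ‖y - x‖ - L)]

lemma exists_int_abs_mul_le_abs_and_abs_sub_mul_le {h : ℝ} (hh : 0 < h) (t : ℝ) :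
    ∃ m : ℤ, |h * m| ≤ |t| ∧ |t - h * m| ≤ h := by
  wlog ht : 0 ≤ t generalizing t
  · obtain ⟨m, hm, hsub⟩ := this (-t) (by linarith)
    refine ⟨-m, ?_, ?_⟩
    · simpa [abs_neg] using hm
    · rw [← abs_neg]; convert hsub using 2; push_cast; ring
  have hfloor : h * ⌊t / h⌋ ≤ t := (le_div_iff₀' hh).mp (Int.floor_le _)
  have hnonneg : (0 : ℝ) ≤ h * ⌊t / h⌋ :=
    mul_nonneg hh.le (by exact_mod_cast Int.floor_nonneg.mpr (by positivity))
  have hlt : t - h < h * ⌊t / h⌋ := by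
    have := mul_lt_mul_of_pos_left (Int.sub_one_lt_floor (t / h)) hh
    rwa [mul_sub, mul_div_cancel₀ _ hh.ne', mul_one] at this
  refine ⟨⌊t / h⌋, ?_, ?_⟩
  · rwa [abs_of_nonneg hnonneg, abs_of_nonneg ht]
  · rw [abs_of_nonneg (by linarith)]
    linarith

namespace EuclideanSpace

variable {ι : Type*} [Fintype ι]

lemma norm_le_norm_of_abs_le {v w : EuclideanSpace ℝ ι} (hvw : ∀ i, |v i| ≤ |w i|) :
    ‖v‖ ≤ ‖w‖ := by
  rw [← sq_le_sq₀ (norm_nonneg _) (norm_nonneg _), real_norm_sq_eq, real_norm_sq_eq]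
  exact Finset.sum_le_sum fun i _ => sq_le_sq.mpr (hvw i)

lemma norm_le_sqrt_card_mul {v : EuclideanSpace ℝ ι} {c : ℝ} (hc : 0 ≤ c)
    (hv : ∀ i, |v i| ≤ c) : ‖v‖ ≤ √(Fintype.card ι) * c := by
  rw [← sq_le_sq₀ (norm_nonneg _) (by positivity), real_norm_sq_eq, mul_pow,
    Real.sq_sqrt (Nat.cast_nonneg _)]
  calc ∑ i, v i ^ 2 ≤ ∑ _i : ι, c ^ 2 :=
        Finset.sum_le_sum fun i _ => sq_le_sq' (abs_le.mp (hv i)).1 (abs_le.mp (hv i)).2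
    _ = Fintype.card ι * c ^ 2 := by simp

end EuclideanSpace

section Grid

variable {n : ℕ}

lemma gridPt_apply (h : ℝ) (k : Fin n → ℤ) (i : Fin n) : gridPt h k i = h * k i := rfl

lemma gridPt_add (h : ℝ) (k r : Fin n → ℤ) :
    gridPt h (k + r) = gridPt h k + gridPt h r := by
  ext i; simp [gridPt_apply, mul_add]

lemma gridPt_eq_smul (h : ℝ) (r : Fin n → ℤ) : gridPt h r = h • gridPt 1 r := by
  ext i; simp [gridPt_apply]

lemma exists_gridPt_norm_le {h : ℝ} (hh : 0 < h) (v : EuclideanSpace ℝ (Fin n)) :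
    ∃ r : Fin n → ℤ, ‖gridPt h r‖ ≤ ‖v‖ ∧ ‖v - gridPt h r‖ ≤ √n * h := by
  choose r hr using fun i => exists_int_abs_mul_le_abs_and_abs_sub_mul_le hh (v i)
  refine ⟨r, EuclideanSpace.norm_le_norm_of_abs_le fun i => (hr i).1, ?_⟩
  simpa using EuclideanSpace.norm_le_sqrt_card_mul hh.le fun i => (hr i).2

end Grid

section Envelope

variable {n : ℕ} {f : EuclideanSpace ℝ (Fin n) → ℝ} {L h lam : ℝ}

lemma moreauLowerDiscrete_eq_iInf (hh : 0 ≤ h) (k : Fin n → ℤ) :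
    moreauLowerDiscrete lam h f k =
      ⨅ r : Fin n → ℤ, (f (gridPt h (k + r)) + lam * ‖gridPt h (k + r) - gridPt h k‖ ^ 2) := by
  unfold moreauLowerDiscrete
  congr 1; ext r
  rw [gridPt_add, add_sub_cancel_left, gridPt_eq_smul h r, norm_smul, Real.norm_of_nonneg hh]
  ring

lemma moreauLower_le_moreauLowerDiscrete (hf : ∀ x y, |f x - f y| ≤ L * ‖x - y‖)
    (hlam : 0 < lam) (hh : 0 ≤ h) (k : Fin n → ℤ) :
    moreauLower lam f (gridPt h k) ≤ moreauLowerDiscrete lam h f k := by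
  rw [moreauLowerDiscrete_eq_iInf hh]
  exact le_ciInf fun r =>
    ciInf_le (bddBelow_range_add_mul_norm_sub_sq hf hlam (gridPt h k)) (gridPt h (k + r))

lemma moreauLowerDiscrete_le_moreauLower_add (hf : ∀ x y, |f x - f y| ≤ L * ‖x - y‖)
    (hL : 0 ≤ L) (hlam : 0 < lam) (hh : 0 < h) (k : Fin n → ℤ) :
    moreauLowerDiscrete lam h f k ≤ moreauLower lam f (gridPt h k) + √n * L * h := by
  set x := gridPt h k
  have hbdd := bddBelow_range_add_mul_norm_sub_sq hf hlam x
  refine sub_le_iff_le_add.mp (le_ciInf fun y => sub_le_iff_le_add.mpr ?_)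
  obtain ⟨r, hr_norm, hr_dist⟩ := exists_gridPt_norm_le hh (y - x)
  have hzx : gridPt h (k + r) - x = gridPt h r := by rw [gridPt_add]; abel
  have hzy : ‖gridPt h (k + r) - y‖ ≤ √n * h := by
    rw [← norm_neg, show -(gridPt h (k + r) - y) = y - x - gridPt h r by rw [← hzx]; abel]
    exact hr_dist
  have hfz : f (gridPt h (k + r)) ≤ f y + L * (√n * h) := by
    linarith [(abs_le.mp (hf (gridPt h (k + r)) y)).2, mul_le_mul_of_nonneg_left hzy hL]
  have hnorm : ‖gridPt h (k + r) - x‖ ^ 2 ≤ ‖y - x‖ ^ 2 := by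
    rw [hzx]; gcongr
  calc moreauLowerDiscrete lam h f k
      ≤ f (gridPt h (k + r)) + lam * ‖gridPt h (k + r) - x‖ ^ 2 := by
        rw [moreauLowerDiscrete_eq_iInf hh.le]
        exact ciInf_le (hbdd.mono (range_comp_subset_range _ _)) r
    _ ≤ f y + lam * ‖y - x‖ ^ 2 + √n * L * h := by
        linarith [mul_le_mul_of_nonneg_left hnorm hlam.le]

end Envelope

theorem discrete_moreau_error_lipschitz_general {n : ℕ}
    (f : EuclideanSpace ℝ (Fin n) → ℝ) (L : ℝ) (hL : 0 ≤ L)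
    (hf : ∀ x y : EuclideanSpace ℝ (Fin n), |f x - f y| ≤ L * ‖x - y‖)
    (h lam : ℝ) (hh : 0 < h) (hlam : 0 < lam) :
    ∀ k : Fin n → ℤ,
      |moreauLowerDiscrete lam h f k - moreauLower lam f (gridPt h k)|
        ≤ (2 + Real.sqrt n) * L * h + 2 * lam * h ^ 2 * n := by
  intro k
  have hlower := moreauLower_le_moreauLowerDiscrete hf hlam hh.le k
  have hupper := moreauLowerDiscrete_le_moreauLower_add hf hL hlam hh k
  have hslack : 0 ≤ 2 * L * h + 2 * lam * h ^ 2 * n := by positivity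
  rw [abs_of_nonneg (sub_nonneg.mpr hlower)]
  linarith

/-- Error estimate for the discrete Moreau envelope of an `L`-Lipschitz function:
`|M_λ^h(f)(x_k) − M_λ(f)(x_k)| ≤ (2 + √n)·L·h + 2λh²n`. -/
theorem discrete_moreau_error_lipschitz {n : ℕ} (hn : 1 ≤ n)
    (f : EuclideanSpace ℝ (Fin n) → ℝ) (L : ℝ) (hL : 0 ≤ L)
    (hf : ∀ x y : EuclideanSpace ℝ (Fin n), |f x - f y| ≤ L * ‖x - y‖)
    (h lam : ℝ) (hh : 0 < h) (hlam : 0 < lam) :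
    ∀ k : Fin n → ℤ,
      |moreauLowerDiscrete lam h f k - moreauLower lam f (gridPt h k)|
        ≤ (2 + Real.sqrt n) * L * h + 2 * lam * h ^ 2 * n :=
  discrete_moreau_error_lipschitz_general f L hL hf h lam hh hlam
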